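/- Let P denote the standard Gaussian probability measure on ℝ (mean 0, variance 1), and define the feasibility probability map F : ℝ² → ℝ by F(d₁,d₂) := P({θ : 0.20 ≤ θ·d₁² + d₂ ∧ θ·d₁² + d₂ ≤ 0.75}). Then F is discontinuous at the point (0, 0.20) and discontinuous at the point (0, 0.75). -/
import Mathlib

open MeasureTheory ProbabilityTheory Filter Topology

lemma aux_comp (c : ℝ) (l : Filter ℝ)
    (h : ContinuousAt (fun d : ℝ × ℝ =>
        ((gaussianReal 0 1)
          {θ : ℝ | 0.20 ≤ θ * d.1 ^ 2 + d.2 ∧ θ * d.1 ^ 2 + d.2 ≤ 0.75}).toReal)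
      ((0 : ℝ), c)) (hl : l ≤ 𝓝 c) :
    Tendsto (fun t : ℝ =>
        ((gaussianReal 0 1) {θ : ℝ | (0.20:ℝ) ≤ t ∧ t ≤ 0.75}).toReal) l
      (𝓝 (((gaussianReal 0 1) {θ : ℝ | (0.20:ℝ) ≤ c ∧ c ≤ 0.75}).toReal)) := by
  have hg : Tendsto (fun t : ℝ => ((0:ℝ), t)) l (𝓝 ((0:ℝ), c)) :=
    ((continuous_const.prodMk continuous_id).tendsto c).mono_left hl
  have H := h.tendsto.comp hg
  simp only [Function.comp_def] at H
  norm_num at H ⊢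
  exact H

lemma aux_univ {c : ℝ} (h1 : (0.20:ℝ) ≤ c) (h2 : c ≤ 0.75) :
    ((gaussianReal (0:ℝ) 1) {θ : ℝ | (0.20:ℝ) ≤ c ∧ c ≤ 0.75}).toReal = 1 := by
  have : {θ : ℝ | (0.20:ℝ) ≤ c ∧ c ≤ 0.75} = Set.univ := by
    ext θ; simp [h1, h2]
  simp [this]

lemma aux_zero (c : ℝ) (l : Filter ℝ)
    (hev : ∀ᶠ t in l, ¬ ((0.20:ℝ) ≤ t ∧ t ≤ 0.75)) :
    Tendsto (fun t : ℝ =>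
        ((gaussianReal 0 1) {θ : ℝ | (0.20:ℝ) ≤ t ∧ t ≤ 0.75}).toReal) l (𝓝 0) := by
  apply Tendsto.congr' _ tendsto_const_nhds
  filter_upwards [hev] with t ht
  have : {θ : ℝ | (0.20:ℝ) ≤ t ∧ t ≤ 0.75} = ∅ := by
    ext θ; simp only [Set.mem_setOf_eq, Set.mem_empty_iff_false, iff_false]; exact ht
  simp [this]

/-- For the standard Gaussian model parameter, the feasibility probability map of the
illustrative example is discontinuous at `(0, 0.20)` and at `(0, 0.75)`. -/
theorem feasibility_probability_discontinuous :
    ¬ ContinuousAt (fun d : ℝ × ℝ =>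
        ((gaussianReal 0 1)
          {θ : ℝ | 0.20 ≤ θ * d.1 ^ 2 + d.2 ∧ θ * d.1 ^ 2 + d.2 ≤ 0.75}).toReal)
      ((0 : ℝ), (0.20 : ℝ)) ∧
    ¬ ContinuousAt (fun d : ℝ × ℝ =>
        ((gaussianReal 0 1)
          {θ : ℝ | 0.20 ≤ θ * d.1 ^ 2 + d.2 ∧ θ * d.1 ^ 2 + d.2 ≤ 0.75}).toReal)
      ((0 : ℝ), (0.75 : ℝ)) := by
  constructor
  · intro h
    have hcomp := aux_comp 0.20 (𝓝[<] (0.20:ℝ)) h nhdsWithin_le_nhds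
    rw [aux_univ le_rfl (by norm_num)] at hcomp
    have h0 := aux_zero 0.20 (𝓝[<] (0.20:ℝ)) (by
      filter_upwards [self_mem_nhdsWithin] with t ht
      exact fun hc => absurd hc.1 (not_le.mpr ht))
    exact one_ne_zero (tendsto_nhds_unique hcomp h0)
  · intro h
    have hcomp := aux_comp 0.75 (𝓝[>] (0.75:ℝ)) h nhdsWithin_le_nhds
    rw [aux_univ (by norm_num) le_rfl] at hcomp
    have h0 := aux_zero 0.75 (𝓝[>] (0.75:ℝ)) (by
      filter_upwards [self_mem_nhdsWithin] with t ht
      exact fun hc => absurd hc.2 (not_le.mpr ht))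
    exact one_ne_zero (tendsto_nhds_unique hcomp h0)
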